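/- arXiv:2005.06439 — 7 statements merged into one kernel-verified Lean document; each statement's English description precedes it below -/
import Mathlib

section
/- Under the assumptions on H, ℓ, s and u in the context: u(0) = 0 and u(ℓ) = 0; u(t) > 0 for every t ∈ (0, ℓ); and u(ℓ/2 − t) = u(ℓ/2 + t) for every t ∈ [0, ℓ/2]. -/
/-!
Write `g r = s r - H r` and `f = g / √(1 - g²)`, so that `u` is the primitive of `f` vanishing
at `0`. The symmetry `s t + s (ℓ - t) = H ℓ` says that `g`, hence `f`, is odd about `ℓ / 2`, so
the integral of `f` over any interval centred at `ℓ / 2` vanishes: this gives `u ℓ = 0` and the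
symmetry of `u`. On `(0, ℓ / 2)` we have `0 < g < 1`, so `f > 0` and `u > 0` on `(0, ℓ / 2]`;
symmetry carries positivity over to `[ℓ / 2, ℓ)`.
-/

open Set intervalIntegral MeasureTheory

section OddIntegrand

variable {f : ℝ → ℝ}

theorem integral_eq_zero_of_antisymm {a b : ℝ} (h : ∀ r ∈ uIcc a b, f (a + b - r) = -f r) :
    ∫ r in a..b, f r = 0 := by
  have hreflect : ∫ r in a..b, f (a + b - r) = ∫ r in a..b, f r := by
    rw [integral_comp_sub_left, add_sub_cancel_right, add_sub_cancel_left]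
  have hneg : ∫ r in a..b, f (a + b - r) = -∫ r in a..b, f r := by
    rw [← intervalIntegral.integral_neg]
    exact integral_congr h
  linarith

theorem integral_eq_integral_of_antisymm {a b c : ℝ} (hb : IntervalIntegrable f volume a b)
    (hc : IntervalIntegrable f volume a c) (h : ∀ r ∈ uIcc b c, f (b + c - r) = -f r) :
    ∫ r in a..b, f r = ∫ r in a..c, f r :=
  (sub_eq_zero.mp ((integral_interval_sub_left hc hb).trans
    (integral_eq_zero_of_antisymm h))).symm

variable {ℓ : ℝ}

theorem integral_half_sub_eq_integral_half_add (hf : IntervalIntegrable f volume 0 ℓ)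
    (hanti : ∀ r ∈ Icc 0 ℓ, f (ℓ - r) = -f r) {t : ℝ} (ht : t ∈ Icc 0 (ℓ / 2)) :
    ∫ r in (0)..(ℓ / 2 - t), f r = ∫ r in (0)..(ℓ / 2 + t), f r := by
  obtain ⟨ht0, htℓ⟩ := ht
  have hsub : Icc (ℓ / 2 - t) (ℓ / 2 + t) ⊆ Icc 0 ℓ := Icc_subset_Icc (by linarith) (by linarith)
  have hint : ∀ x ∈ Icc (ℓ / 2 - t) (ℓ / 2 + t), IntervalIntegrable f volume 0 x := fun x hx =>
    hf.mono_set (uIcc_subset_uIcc left_mem_uIcc (Icc_subset_uIcc (hsub hx)))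
  refine integral_eq_integral_of_antisymm (hint _ ⟨le_rfl, by linarith⟩)
    (hint _ ⟨by linarith, le_rfl⟩) fun r hr => ?_
  rw [uIcc_of_le (by linarith)] at hr
  rw [show ℓ / 2 - t + (ℓ / 2 + t) - r = ℓ - r by ring]
  exact hanti r (hsub hr)

theorem integral_pos_of_antisymm (hf : IntervalIntegrable f volume 0 ℓ)
    (hanti : ∀ r ∈ Icc 0 ℓ, f (ℓ - r) = -f r) (hpos : ∀ r ∈ Ioo 0 (ℓ / 2), 0 < f r)
    {t : ℝ} (ht : t ∈ Ioo 0 ℓ) : 0 < ∫ r in (0)..t, f r := by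
  have hleft : ∀ t ∈ Ioc 0 (ℓ / 2), 0 < ∫ r in (0)..t, f r := fun t ⟨ht0, htℓ⟩ => by
    have ht_mem : t ∈ uIcc 0 ℓ := Icc_subset_uIcc ⟨ht0.le, by linarith⟩
    exact intervalIntegral_pos_of_pos_on (hf.mono_set (uIcc_subset_uIcc left_mem_uIcc ht_mem))
      (fun x hx => hpos x ⟨hx.1, hx.2.trans_le htℓ⟩) ht0
  rcases le_or_gt t (ℓ / 2) with hle | hgt
  · exact hleft t ⟨ht.1, hle⟩
  · have hrefl := integral_half_sub_eq_integral_half_add hf hanti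
      (t := t - ℓ / 2) ⟨by linarith, by linarith [ht.2]⟩
    rw [show ℓ / 2 + (t - ℓ / 2) = t by ring, show ℓ / 2 - (t - ℓ / 2) = ℓ - t by ring]
      at hrefl
    exact hrefl ▸ hleft (ℓ - t) ⟨by linarith [ht.2], by linarith⟩

end OddIntegrand

theorem intervalIntegrable_div_sqrt_one_sub_sq {g : ℝ → ℝ} {a b : ℝ}
    (hg : ContinuousOn g (uIcc a b)) (hlt : ∀ r ∈ uIcc a b, |g r| < 1) :
    IntervalIntegrable (fun r => g r / √(1 - g r ^ 2)) volume a b := by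
  refine ContinuousOn.intervalIntegrable (hg.div (by fun_prop) fun r hr => ?_)
  have := (sq_lt_one_iff_abs_lt_one _).mpr (hlt r hr)
  exact (Real.sqrt_pos.mpr (by linarith)).ne'

theorem cantor_profile_basic_properties_general
    (H ℓ : ℝ) (hℓ : 0 < ℓ) (hHℓ : H * ℓ < 2)
    (s : ℝ → ℝ) (hscont : Continuous s)
    (hsym : ∀ t ∈ Set.Icc (0 : ℝ) ℓ, s t + s (ℓ - t) = H * ℓ)
    (hgt : ∀ t ∈ Set.Ioo (0 : ℝ) (ℓ / 2), H * t < s t)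
    (hbd : ∀ t ∈ Set.Icc (0 : ℝ) ℓ, |s t - H * t| ≤ H * ℓ / 2)
    (u : ℝ → ℝ)
    (hu : ∀ t, u t = ∫ r in (0 : ℝ)..t,
      (s r - H * r) / Real.sqrt (1 - (s r - H * r) ^ 2)) :
    u 0 = 0 ∧ u ℓ = 0 ∧
    (∀ t ∈ Set.Ioo (0 : ℝ) ℓ, 0 < u t) ∧
    (∀ t ∈ Set.Icc (0 : ℝ) (ℓ / 2), u (ℓ / 2 - t) = u (ℓ / 2 + t)) := by
  set g : ℝ → ℝ := fun r => s r - H * r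
  set f : ℝ → ℝ := fun r => g r / √(1 - g r ^ 2)
  have hu' : ∀ t, u t = ∫ r in (0)..t, f r := hu
  have hIcc : uIcc 0 ℓ = Icc 0 ℓ := uIcc_of_le hℓ.le
  have hg_lt : ∀ r ∈ Icc 0 ℓ, |g r| < 1 := fun r hr => by linarith [hbd r hr]
  have hint : IntervalIntegrable f volume 0 ℓ :=
    intervalIntegrable_div_sqrt_one_sub_sq (by fun_prop) (hIcc ▸ hg_lt)
  have hanti : ∀ r ∈ Icc 0 ℓ, f (ℓ - r) = -f r := fun r hr => by
    have hg : g (ℓ - r) = -g r := by linear_combination hsym r hr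
    simp only [f, hg, neg_sq, neg_div]
  have hpos : ∀ r ∈ Ioo 0 (ℓ / 2), 0 < f r := fun r hr => by
    have hg_pos : 0 < g r := sub_pos.mpr (hgt r hr)
    have hg_lt_one : g r < 1 := (le_abs_self _).trans_lt (hg_lt r ⟨hr.1.le, by linarith [hr.2]⟩)
    exact div_pos hg_pos (Real.sqrt_pos.mpr (by nlinarith))
  refine ⟨by simp [hu], ?_, fun t ht => ?_, fun t ht => ?_⟩
  · rw [hu']
    exact integral_eq_zero_of_antisymm fun r hr => by rw [zero_add]; exact hanti r (hIcc ▸ hr)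
  · rw [hu']
    exact integral_pos_of_antisymm hint hanti hpos ht
  · rw [hu', hu']
    exact integral_half_sub_eq_integral_half_add hint hanti ht

/-- **Properties a)–c) of Lemma 6.6 of the paper.** Under the stated assumptions on
the staircase `s` and with `u(t) = ∫₀ᵗ (s(r)−Hr)/√(1−(s(r)−Hr)²) dr`, one has
`u(0) = u(ℓ) = 0`, `u > 0` on `(0, ℓ)`, and `u` is symmetric about `ℓ/2`. -/
theorem cantor_profile_basic_properties
    (H ℓ : ℝ) (hH : 0 < H) (hℓ : 0 < ℓ) (hHℓ : H * ℓ < 2)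
    (s : ℝ → ℝ) (hscont : Continuous s) (hsmono : Monotone s)
    (hs0 : s 0 = 0) (hsℓ : s ℓ = H * ℓ)
    (hsym : ∀ t ∈ Set.Icc (0 : ℝ) ℓ, s t + s (ℓ - t) = H * ℓ)
    (hgt : ∀ t ∈ Set.Ioo (0 : ℝ) (ℓ / 2), H * t < s t)
    (hbd : ∀ t ∈ Set.Icc (0 : ℝ) ℓ, |s t - H * t| ≤ H * ℓ / 2)
    (u : ℝ → ℝ)
    (hu : ∀ t, u t = ∫ r in (0 : ℝ)..t,
      (s r - H * r) / Real.sqrt (1 - (s r - H * r) ^ 2)) :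
    u 0 = 0 ∧ u ℓ = 0 ∧
    (∀ t ∈ Set.Ioo (0 : ℝ) ℓ, 0 < u t) ∧
    (∀ t ∈ Set.Icc (0 : ℝ) (ℓ / 2), u (ℓ / 2 - t) = u (ℓ / 2 + t)) :=
  cantor_profile_basic_properties_general H ℓ hℓ hHℓ s hscont hsym hgt hbd u hu
end

section
/- Under the assumptions on H, ℓ, s and u in the context, suppose s is constant on an open interval (a, b) ⊆ (0, ℓ). Then for every t ∈ (a, b), the function t ↦ u'(t)/√(1 + u'(t)²), where u'(t) = (s(t) − H·t)/√(1 − (s(t) − H·t)²), is differentiable at t with derivative equal to −H; that is, u solves the constant mean curvature equation −(u'/√(1 + (u')²))' = H on (a, b). -/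
lemma div_sqrt_one_add_sq_of_div_sqrt_one_sub_sq {x : ℝ} (hx : |x| < 1) :
    (x / Real.sqrt (1 - x ^ 2)) / Real.sqrt (1 + (x / Real.sqrt (1 - x ^ 2)) ^ 2) = x := by
  have hpos : 0 < 1 - x ^ 2 := by nlinarith [sq_abs x, abs_nonneg x]
  set y := Real.sqrt (1 - x ^ 2)
  have hy : 0 < y := Real.sqrt_pos.mpr hpos
  have hy_sq : y ^ 2 = 1 - x ^ 2 := Real.sq_sqrt hpos.le
  have h_one_add : 1 + (x / y) ^ 2 = (y ^ 2)⁻¹ := by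
    field_simp
    linarith
  rw [h_one_add, Real.sqrt_inv, Real.sqrt_sq hy.le]
  field_simp

theorem cantor_profile_cmc_on_flat_parts_general
    (H ℓ : ℝ) (hHℓ : H * ℓ < 2)
    (s : ℝ → ℝ)
    (hbd : ∀ t ∈ Set.Icc (0 : ℝ) ℓ, |s t - H * t| ≤ H * ℓ / 2)
    (a b : ℝ) (hsub : Set.Ioo a b ⊆ Set.Ioo (0 : ℝ) ℓ)
    (hconst : ∀ x ∈ Set.Ioo a b, ∀ y ∈ Set.Ioo a b, s x = s y) :
    ∀ t ∈ Set.Ioo a b,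
      HasDerivAt
        (fun r => ((s r - H * r) / Real.sqrt (1 - (s r - H * r) ^ 2)) /
          Real.sqrt (1 + ((s r - H * r) / Real.sqrt (1 - (s r - H * r) ^ 2)) ^ 2))
        (-H) t := by
  intro t ht
  have h_small : ∀ r ∈ Set.Ioo a b, |s r - H * r| < 1 := fun r hr =>
    (hbd r (Set.Ioo_subset_Icc_self (hsub hr))).trans_lt (by linarith)
  -- On `(a, b)` the profile slope collapses to the affine function `r ↦ s t - H r`.
  have h_affine : HasDerivAt (fun r => s t - H * r) (-H) t := by
    simpa using ((hasDerivAt_id t).const_mul H).const_sub (s t)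
  refine h_affine.congr_of_eventuallyEq ?_
  filter_upwards [Ioo_mem_nhds ht.1 ht.2] with r hr
  rw [div_sqrt_one_add_sq_of_div_sqrt_one_sub_sq (h_small r hr), hconst r hr t ht]

/-- **Property e) of Lemma 6.6 of the paper.** On any open interval `(a, b) ⊆ (0, ℓ)`
where the staircase `s` is constant, the profile `u` solves the constant mean
curvature equation `−(u'/√(1+u'²))' = H`, where
`u'(t) = (s(t)−Ht)/√(1−(s(t)−Ht)²)`. -/
theorem cantor_profile_cmc_on_flat_parts
    (H ℓ : ℝ) (hH : 0 < H) (hℓ : 0 < ℓ) (hHℓ : H * ℓ < 2)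
    (s : ℝ → ℝ) (hscont : Continuous s) (hsmono : Monotone s)
    (hs0 : s 0 = 0) (hsℓ : s ℓ = H * ℓ)
    (hsym : ∀ t ∈ Set.Icc (0 : ℝ) ℓ, s t + s (ℓ - t) = H * ℓ)
    (hgt : ∀ t ∈ Set.Ioo (0 : ℝ) (ℓ / 2), H * t < s t)
    (hbd : ∀ t ∈ Set.Icc (0 : ℝ) ℓ, |s t - H * t| ≤ H * ℓ / 2)
    (u : ℝ → ℝ)
    (hu : ∀ t, u t = ∫ r in (0 : ℝ)..t,
      (s r - H * r) / Real.sqrt (1 - (s r - H * r) ^ 2))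
    (a b : ℝ) (hab : a < b) (hsub : Set.Ioo a b ⊆ Set.Ioo (0 : ℝ) ℓ)
    (hconst : ∀ x ∈ Set.Ioo a b, ∀ y ∈ Set.Ioo a b, s x = s y) :
    ∀ t ∈ Set.Ioo a b,
      HasDerivAt
        (fun r => ((s r - H * r) / Real.sqrt (1 - (s r - H * r) ^ 2)) /
          Real.sqrt (1 + ((s r - H * r) / Real.sqrt (1 - (s r - H * r) ^ 2)) ^ 2))
        (-H) t :=
  cantor_profile_cmc_on_flat_parts_general H ℓ hHℓ s hbd a b hsub hconst
end

section
/- Under the assumptions on H, ℓ, s and u in the context: for every t ∈ [0, ℓ] and every r ∈ (0, ℓ) with s(t) − 1 < H·r < s(t) + 1, one has u(t) − (1/H)·√(1 − (s(t) − H·t)²) ≤ u(r) − (1/H)·√(1 − (s(t) − H·r)²). -/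
open Set intervalIntegral

/-!
Write `g x = x / √(1 - x²)` (that is, `tan (arcsin x)`), which is increasing on `(-1, 1)`, and
`ψ ρ = (1/H) √(1 - (s t - H ρ)²)`, so that `ψ' ρ = g (s t - H ρ)` while `u' ρ = g (s ρ - H ρ)`.
By monotonicity of `s` and `g`, the derivative of `u - ψ` is `≤ 0` to the left of `t` and `≥ 0`
to the right of it, so `u - ψ` is minimal at `t`.
-/

lemma monotoneOn_div_sqrt_one_sub_sq :
    MonotoneOn (fun x : ℝ => x / √(1 - x ^ 2)) (Ioo (-1) 1) := by
  intro x hx y hy hxy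
  simp only [← Real.tan_arcsin]
  exact Real.strictMonoOn_tan.monotoneOn
    ⟨Real.neg_pi_div_two_lt_arcsin.2 hx.1, Real.arcsin_lt_pi_div_two.2 hx.2⟩
    ⟨Real.neg_pi_div_two_lt_arcsin.2 hy.1, Real.arcsin_lt_pi_div_two.2 hy.2⟩
    (Real.arcsin_le_arcsin hxy)

lemma one_sub_sq_pos_of_mem_Ioo {x : ℝ} (hx : x ∈ Ioo (-1) 1) : 0 < 1 - x ^ 2 := by
  nlinarith [hx.1, hx.2]

lemma continuousOn_div_sqrt_one_sub_sq :
    ContinuousOn (fun x : ℝ => x / √(1 - x ^ 2)) (Ioo (-1) 1) :=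
  continuousOn_id.div (by fun_prop) fun _ hx => (Real.sqrt_pos.2 (one_sub_sq_pos_of_mem_Ioo hx)).ne'

lemma hasDerivAt_inv_mul_sqrt_one_sub_sq_sub_mul {c H x : ℝ} (hH : H ≠ 0)
    (hx : c - H * x ∈ Ioo (-1) 1) :
    HasDerivAt (fun ρ => (1 / H) * √(1 - (c - H * ρ) ^ 2))
      ((c - H * x) / √(1 - (c - H * x) ^ 2)) x := by
  have hlin : HasDerivAt (fun ρ : ℝ => c - H * ρ) (-H) x := by
    simpa using ((hasDerivAt_id x).const_mul H).const_sub c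
  have hsqrt := ((hlin.pow 2).const_sub 1).sqrt (one_sub_sq_pos_of_mem_Ioo hx).ne'
  simp only [Pi.pow_apply] at hsqrt
  refine (hsqrt.const_mul (1 / H)).congr_deriv ?_
  have : √(1 - (c - H * x) ^ 2) ≠ 0 := (Real.sqrt_pos.2 (one_sub_sq_pos_of_mem_Ioo hx)).ne'
  field_simp
  ring

lemma intervalIntegral.integral_le_integral_of_le_on_Icc_of_ge_on_Icc {f g : ℝ → ℝ} {a b : ℝ}
    (hf : IntervalIntegrable f MeasureTheory.volume a b)
    (hg : IntervalIntegrable g MeasureTheory.volume a b)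
    (hab : ∀ x ∈ Icc a b, f x ≤ g x) (hba : ∀ x ∈ Icc b a, g x ≤ f x) :
    ∫ x in a..b, f x ≤ ∫ x in a..b, g x := by
  rcases le_total a b with h | h
  · exact integral_mono_on h hf hg hab
  · rw [integral_symm, integral_symm b]
    exact neg_le_neg (integral_mono_on h hg.symm hf.symm hba)

lemma sub_mul_mem_Ioo_of_mem_uIcc {c H t r ρ : ℝ} (ht : c - H * t ∈ Ioo (-1) 1)
    (hr : c - H * r ∈ Ioo (-1) 1) (hρ : ρ ∈ uIcc t r) : c - H * ρ ∈ Ioo (-1) 1 := by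
  refine ordConnected_Ioo.uIcc_subset ht hr ?_
  rw [← image_const_sub_uIcc, ← image_const_mul_uIcc]
  exact ⟨H * ρ, ⟨ρ, hρ, rfl⟩, rfl⟩

theorem cantor_profile_tangent_ball_inequality_general
    (H ℓ : ℝ) (hH : 0 < H) (hHℓ : H * ℓ < 2)
    (s : ℝ → ℝ) (hscont : Continuous s) (hsmono : Monotone s)
    (hbd : ∀ t ∈ Set.Icc (0 : ℝ) ℓ, |s t - H * t| ≤ H * ℓ / 2)
    (u : ℝ → ℝ)
    (hu : ∀ t, u t = ∫ r in (0 : ℝ)..t,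
      (s r - H * r) / Real.sqrt (1 - (s r - H * r) ^ 2)) :
    ∀ t ∈ Set.Icc (0 : ℝ) ℓ, ∀ r ∈ Set.Ioo (0 : ℝ) ℓ,
      s t - 1 < H * r → H * r < s t + 1 →
      u t - (1 / H) * Real.sqrt (1 - (s t - H * t) ^ 2) ≤
        u r - (1 / H) * Real.sqrt (1 - (s t - H * r) ^ 2) := by
  intro t ht r hr hr₁ hr₂
  set g : ℝ → ℝ := fun x => x / √(1 - x ^ 2)
  have hw : ∀ ρ ∈ Icc 0 ℓ, s ρ - H * ρ ∈ Ioo (-1) 1 := fun ρ hρ =>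
    abs_lt.1 ((hbd ρ hρ).trans_lt (by linarith))
  have hv : ∀ ρ ∈ uIcc t r, s t - H * ρ ∈ Ioo (-1) 1 := fun ρ =>
    sub_mul_mem_Ioo_of_mem_uIcc (hw t ht) ⟨by linarith, by linarith⟩
  have hu' : ContinuousOn (fun ρ => g (s ρ - H * ρ)) (Icc 0 ℓ) :=
    continuousOn_div_sqrt_one_sub_sq.comp (by fun_prop) hw
  have hψ' : ContinuousOn (fun ρ => g (s t - H * ρ)) (uIcc t r) :=
    continuousOn_div_sqrt_one_sub_sq.comp (by fun_prop) hv
  have hr' : r ∈ Icc 0 ℓ := Ioo_subset_Icc_self hr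
  have h0 : (0 : ℝ) ∈ Icc 0 ℓ := left_mem_Icc.2 (ht.1.trans ht.2)
  have hu_sub : u r - u t = ∫ ρ in t..r, g (s ρ - H * ρ) := by
    rw [hu r, hu t]
    exact integral_interval_sub_left (hu'.mono (uIcc_subset_Icc h0 hr')).intervalIntegrable
      (hu'.mono (uIcc_subset_Icc h0 ht)).intervalIntegrable
  have hψ_sub : (1 / H) * √(1 - (s t - H * r) ^ 2) - (1 / H) * √(1 - (s t - H * t) ^ 2) =
      ∫ ρ in t..r, g (s t - H * ρ) :=
    (integral_eq_sub_of_hasDerivAt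
      (fun ρ hρ => hasDerivAt_inv_mul_sqrt_one_sub_sq_sub_mul hH.ne' (hv ρ hρ))
      hψ'.intervalIntegrable).symm
  have key : ∫ ρ in t..r, g (s t - H * ρ) ≤ ∫ ρ in t..r, g (s ρ - H * ρ) := by
    have hsub : uIcc t r ⊆ Icc 0 ℓ := uIcc_subset_Icc ht hr'
    refine integral_le_integral_of_le_on_Icc_of_ge_on_Icc hψ'.intervalIntegrable
      (hu'.mono hsub).intervalIntegrable (fun ρ hρ => ?_) (fun ρ hρ => ?_)
    · have hρ' : ρ ∈ uIcc t r := Icc_subset_uIcc hρ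
      exact monotoneOn_div_sqrt_one_sub_sq (hv ρ hρ') (hw ρ (hsub hρ'))
        (by linarith [hsmono hρ.1])
    · have hρ' : ρ ∈ uIcc t r := Icc_subset_uIcc' hρ
      exact monotoneOn_div_sqrt_one_sub_sq (hw ρ (hsub hρ')) (hv ρ hρ')
        (by linarith [hsmono hρ.2])
  linarith

/-- **Lemma 6.7 of the paper.** For every `t ∈ [0, ℓ]` and every `r ∈ (0, ℓ)` with
`s(t) − 1 < H·r < s(t) + 1`, one has
`u(t) − (1/H)·√(1−(s(t)−Ht)²) ≤ u(r) − (1/H)·√(1−(s(t)−Hr)²)`. -/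
theorem cantor_profile_tangent_ball_inequality
    (H ℓ : ℝ) (hH : 0 < H) (hℓ : 0 < ℓ) (hHℓ : H * ℓ < 2)
    (s : ℝ → ℝ) (hscont : Continuous s) (hsmono : Monotone s)
    (hs0 : s 0 = 0) (hsℓ : s ℓ = H * ℓ)
    (hsym : ∀ t ∈ Set.Icc (0 : ℝ) ℓ, s t + s (ℓ - t) = H * ℓ)
    (hgt : ∀ t ∈ Set.Ioo (0 : ℝ) (ℓ / 2), H * t < s t)
    (hbd : ∀ t ∈ Set.Icc (0 : ℝ) ℓ, |s t - H * t| ≤ H * ℓ / 2)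
    (u : ℝ → ℝ)
    (hu : ∀ t, u t = ∫ r in (0 : ℝ)..t,
      (s r - H * r) / Real.sqrt (1 - (s r - H * r) ^ 2)) :
    ∀ t ∈ Set.Icc (0 : ℝ) ℓ, ∀ r ∈ Set.Ioo (0 : ℝ) ℓ,
      s t - 1 < H * r → H * r < s t + 1 →
      u t - (1 / H) * Real.sqrt (1 - (s t - H * t) ^ 2) ≤
        u r - (1 / H) * Real.sqrt (1 - (s t - H * r) ^ 2) :=
  cantor_profile_tangent_ball_inequality_general H ℓ hH hHℓ s hscont hsmono hbd u hu
end

section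
/- Under the assumptions on H, ℓ, s and u in the context: for t ∈ (0, ℓ) define the point q₀(t) = (t + (s(t) − H·t)/H, u(t) − (1/H)·√(1 − (s(t) − H·t)²)) ∈ ℝ². Then the point (t, u(t)) lies on the circle of radius 1/H centered at q₀(t), i.e. the Euclidean distance from (t, u(t)) to q₀(t) equals 1/H, and every point p = (p₁, p₂) of the closed disc of radius 1/H centered at q₀(t) with p₁ ∈ [0, ℓ] satisfies p₂ ≤ u(p₁); that is, the closed disc of radius 1/H tangent to the graph of u at (t, u(t)) from below lies, within the strip [0, ℓ] × ℝ, entirely in the subgraph of u. -/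
/-!
Write `w = s - H·id` and `R = 1/H`, so that `u' = ψ ∘ w` with `ψ(y) = y / √(1 - y²)`,
which is `tan ∘ arcsin` and hence increasing on `(-1, 1)`. The upper arc of the circle of
radius `R` around `q₀(t)` has slope `ψ(s(t) - H x)` at `x`, while `u` has slope
`ψ(s(x) - H x)`. Since `s` is nondecreasing, `u` climbs at least as fast as the arc to the
right of `t` and descends at least as fast to the left of it; as both pass through
`(t, u(t))`, the arc, and hence the whole disc, stays below the graph of `u`.
-/

open Set intervalIntegral

lemma div_sqrt_one_sub_sq_le_div_sqrt_one_sub_sq {x y : ℝ} (hx : -1 < x) (hy : y < 1)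
    (hxy : x ≤ y) : x / √(1 - x ^ 2) ≤ y / √(1 - y ^ 2) := by
  rw [← Real.tan_arcsin, ← Real.tan_arcsin]
  exact Real.strictMonoOn_tan.monotoneOn
    ⟨Real.neg_pi_div_two_lt_arcsin.2 hx, Real.arcsin_lt_pi_div_two.2 (hxy.trans_lt hy)⟩
    ⟨Real.neg_pi_div_two_lt_arcsin.2 (hx.trans_le hxy), Real.arcsin_lt_pi_div_two.2 hy⟩
    (Real.arcsin_le_arcsin hxy)

lemma ContinuousOn.div_sqrt_one_sub_sq {w : ℝ → ℝ} {S : Set ℝ} (hw : ContinuousOn w S)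
    (hw1 : ∀ y ∈ S, |w y| < 1) : ContinuousOn (fun y => w y / √(1 - w y ^ 2)) S :=
  hw.div (by fun_prop) fun y hy =>
    (Real.sqrt_pos.2 (sub_pos.2 (sq_lt_one_iff_abs_lt_one _ |>.2 (hw1 y hy)))).ne'

lemma ContinuousOn.hasDerivAt_integral_of_mem_Ioo {g : ℝ → ℝ} {a b x : ℝ}
    (hg : ContinuousOn g (Icc a b)) (hx : x ∈ Ioo a b) :
    HasDerivAt (fun y => ∫ r in a..y, g r) (g x) x :=
  integral_hasDerivAt_right
    ((hg.mono (Icc_subset_Icc le_rfl hx.2.le)).intervalIntegrable_of_Icc hx.1.le)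
    ((hg.mono Ioo_subset_Icc_self).stronglyMeasurableAtFilter isOpen_Ioo x hx)
    (hg.continuousAt (Icc_mem_nhds hx.1 hx.2))

lemma sqrt_sq_sub_sq_eq_mul_sqrt {R z : ℝ} (hR : 0 < R) :
    √(R ^ 2 - z ^ 2) = R * √(1 - (z / R) ^ 2) := by
  rw [show R ^ 2 - z ^ 2 = R ^ 2 * (1 - (z / R) ^ 2) by field_simp, Real.sqrt_mul (sq_nonneg R),
    Real.sqrt_sq hR.le]

lemma hasDerivAt_sqrt_sq_sub_sq {R c x : ℝ} (hR : 0 < R) (hx : x ∈ Ioo (c - R) (c + R)) :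
    HasDerivAt (fun y => √(R ^ 2 - (y - c) ^ 2))
      ((c - x) / R / √(1 - ((c - x) / R) ^ 2)) x := by
  have hlt : (x - c) ^ 2 < R ^ 2 := sq_lt_sq' (by linarith [hx.1]) (by linarith [hx.2])
  have hd : HasDerivAt (fun y => R ^ 2 - (y - c) ^ 2) (-(2 * (x - c))) x := by
    simpa using (((hasDerivAt_id x).sub_const c).pow 2).const_sub (R ^ 2)
  convert hd.sqrt (sub_pos.2 hlt).ne' using 1
  have hne : 0 < √(1 - ((c - x) / R) ^ 2) := by
    rw [Real.sqrt_pos, sub_pos, div_pow, div_lt_one (pow_pos hR 2), ← neg_sub, neg_sq]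
    exact hlt
  rw [sqrt_sq_sub_sq_eq_mul_sqrt hR, show ((x - c) / R) ^ 2 = ((c - x) / R) ^ 2 by ring]
  field_simp
  ring

lemma mem_Icc_and_le_add_sqrt_of_sqrt_le {p₁ p₂ c d R : ℝ}
    (h : √((p₁ - c) ^ 2 + (p₂ - d) ^ 2) ≤ R) :
    p₁ ∈ Icc (c - R) (c + R) ∧ p₂ ≤ d + √(R ^ 2 - (p₁ - c) ^ 2) := by
  obtain ⟨hR, hsq⟩ := Real.sqrt_le_iff.1 h
  refine ⟨mem_Icc_iff_abs_le.1 (abs_le_of_sq_le_sq ?_ hR), ?_⟩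
  · nlinarith [sq_nonneg (p₂ - d)]
  · have := Real.abs_le_sqrt (x := p₂ - d) (y := R ^ 2 - (p₁ - c) ^ 2) (by linarith)
    linarith [le_abs_self (p₂ - d)]

lemma Convex.le_of_le_of_deriv_le_right_of_deriv_le_left {D : Set ℝ}
    (hD : Convex ℝ D) {f g f' g' : ℝ → ℝ} {t : ℝ} (ht : t ∈ D)
    (hf : ContinuousOn f D) (hg : ContinuousOn g D)
    (hf' : ∀ y ∈ interior D, HasDerivAt f (f' y) y)
    (hg' : ∀ y ∈ interior D, HasDerivAt g (g' y) y)
    (hright : ∀ y ∈ interior D, t < y → f' y ≤ g' y)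
    (hleft : ∀ y ∈ interior D, y < t → g' y ≤ f' y)
    (hft : f t ≤ g t) {x : ℝ} (hx : x ∈ D) : f x ≤ g x := by
  have hderiv : ∀ y ∈ interior D, HasDerivAt (g - f) (g' y - f' y) y :=
    fun y hy => (hg' y hy).sub (hf' y hy)
  suffices (g - f) t ≤ (g - f) x by simp only [Pi.sub_apply] at this; linarith
  rcases le_total t x with htx | hxt
  · refine monotoneOn_of_hasDerivWithinAt_nonneg (f' := g' - f') (hD.inter (convex_Ici t))
      ((hg.sub hf).mono inter_subset_left) (fun y hy => ?_) (fun y hy => ?_)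
      ⟨ht, self_mem_Ici⟩ ⟨hx, htx⟩ htx
    all_goals rw [interior_inter, interior_Ici] at hy
    · exact (hderiv y hy.1).hasDerivWithinAt
    · exact sub_nonneg.2 (hright y hy.1 hy.2)
  · refine antitoneOn_of_hasDerivWithinAt_nonpos (f' := g' - f') (hD.inter (convex_Iic t))
      ((hg.sub hf).mono inter_subset_left) (fun y hy => ?_) (fun y hy => ?_)
      ⟨hx, hxt⟩ ⟨ht, self_mem_Iic⟩ hxt
    all_goals rw [interior_inter, interior_Iic] at hy
    · exact (hderiv y hy.1).hasDerivWithinAt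
    · exact sub_nonpos.2 (hleft y hy.1 hy.2)

theorem arc_le_of_hasDerivAt_div_sqrt_one_sub_sq {R a b t x : ℝ} {w u : ℝ → ℝ} (hR : 0 < R)
    (hw : MonotoneOn (fun y => w y + y / R) (Icc a b)) (hw1 : ∀ y ∈ Icc a b, |w y| < 1)
    (hu : ContinuousOn u (Icc a b))
    (hu' : ∀ y ∈ Ioo a b, HasDerivAt u (w y / √(1 - w y ^ 2)) y)
    (ht : t ∈ Icc a b) (hx : x ∈ Icc a b)
    (hxc : x ∈ Icc (t + R * w t - R) (t + R * w t + R)) :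
    u t - R * √(1 - w t ^ 2) + √(R ^ 2 - (x - (t + R * w t)) ^ 2) ≤ u x := by
  set c := t + R * w t
  have hint : interior (Icc a b ∩ Icc (c - R) (c + R)) = Ioo a b ∩ Ioo (c - R) (c + R) := by
    rw [interior_inter, interior_Icc, interior_Icc]
  have htc : t ∈ Icc (c - R) (c + R) := mem_Icc_iff_abs_le.1 <| by
    rw [add_sub_cancel_left, abs_mul, abs_of_pos hR]
    exact mul_le_of_le_one_right hR.le (hw1 t ht).le
  have hft : √(R ^ 2 - (t - c) ^ 2) = R * √(1 - w t ^ 2) := by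
    rw [sqrt_sq_sub_sq_eq_mul_sqrt hR, show (t - c) / R = -w t by simp only [c]; field_simp; ring,
      neg_sq]
  -- the arc's slope at `y` is `ψ((c - y) / R)`; this compares `(c - y) / R` with `w y`
  have hslope : ∀ y, (c - y) / R = w t + t / R - y / R := fun y => by
    simp only [c]; field_simp; ring
  refine ((convex_Icc a b).inter (convex_Icc _ _)).le_of_le_of_deriv_le_right_of_deriv_le_left
    (f := fun y => u t - R * √(1 - w t ^ 2) + √(R ^ 2 - (y - c) ^ 2))
    (f' := fun y => (c - y) / R / √(1 - ((c - y) / R) ^ 2))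
    (g' := fun y => w y / √(1 - w y ^ 2)) ⟨ht, htc⟩ (by fun_prop)
    (hu.mono inter_subset_left) (fun y hy => ?_) (fun y hy => ?_) (fun y hy hty => ?_)
    (fun y hy hyt => ?_) (by simp only [hft]; linarith) ⟨hx, hxc⟩
  all_goals rw [hint] at hy
  · exact (hasDerivAt_sqrt_sq_sub_sq hR hy.2).const_add _
  · exact hu' y hy.1
  · have := hw ht (Ioo_subset_Icc_self hy.1) hty.le
    refine div_sqrt_one_sub_sq_le_div_sqrt_one_sub_sq ?_
      (abs_lt.1 (hw1 y (Ioo_subset_Icc_self hy.1))).2 (by rw [hslope]; linarith)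
    rw [lt_div_iff₀ hR]; linarith [hy.2.2]
  · have := hw (Ioo_subset_Icc_self hy.1) ht hyt.le
    refine div_sqrt_one_sub_sq_le_div_sqrt_one_sub_sq
      (abs_lt.1 (hw1 y (Ioo_subset_Icc_self hy.1))).1 ?_ (by rw [hslope]; linarith)
    rw [div_lt_iff₀ hR]; linarith [hy.2.1]

theorem cantor_profile_interior_tangent_ball_general
    (H ℓ : ℝ) (hH : 0 < H) (hHℓ : H * ℓ < 2)
    (s : ℝ → ℝ) (hscont : Continuous s) (hsmono : Monotone s)
    (hbd : ∀ t ∈ Set.Icc (0 : ℝ) ℓ, |s t - H * t| ≤ H * ℓ / 2)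
    (u : ℝ → ℝ)
    (hu : ∀ t, u t = ∫ r in (0 : ℝ)..t,
      (s r - H * r) / Real.sqrt (1 - (s r - H * r) ^ 2)) :
    ∀ t ∈ Set.Ioo (0 : ℝ) ℓ,
      Real.sqrt ((t - (t + (s t - H * t) / H)) ^ 2 +
          (u t - (u t - (1 / H) * Real.sqrt (1 - (s t - H * t) ^ 2))) ^ 2) = 1 / H ∧
      ∀ p₁ p₂ : ℝ,
        Real.sqrt ((p₁ - (t + (s t - H * t) / H)) ^ 2 +
            (p₂ - (u t - (1 / H) * Real.sqrt (1 - (s t - H * t) ^ 2))) ^ 2) ≤ 1 / H →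
        p₁ ∈ Set.Icc (0 : ℝ) ℓ →
        p₂ ≤ u p₁ := by
  intro t ht
  have hR : 0 < 1 / H := by positivity
  have hw1 : ∀ r ∈ Icc 0 ℓ, |s r - H * r| < 1 := fun r hr => (hbd r hr).trans_lt (by linarith)
  have hslope := (hscont.continuousOn.sub (by fun_prop)).div_sqrt_one_sub_sq hw1
  have hIcc : uIcc 0 ℓ = Icc 0 ℓ := uIcc_of_le (ht.1.trans ht.2).le
  obtain rfl := funext hu
  rw [show t + (s t - H * t) / H = t + 1 / H * (s t - H * t) by ring]
  refine ⟨?_, fun p₁ p₂ hp hp₁ => ?_⟩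
  · have hsq := Real.sq_sqrt (sub_nonneg.2
      ((sq_lt_one_iff_abs_lt_one _).2 (hw1 t (Ioo_subset_Icc_self ht))).le)
    rw [show t - (t + 1 / H * (s t - H * t)) = -(1 / H * (s t - H * t)) by ring, sub_sub_cancel,
      neg_sq, mul_pow, mul_pow, hsq, ← mul_add, add_sub_cancel, mul_one, Real.sqrt_sq hR.le]
  · obtain ⟨hp₁c, hp₂⟩ := mem_Icc_and_le_add_sqrt_of_sqrt_le hp
    refine hp₂.trans (arc_le_of_hasDerivAt_div_sqrt_one_sub_sq hR ?_ hw1 ?_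
      (fun y hy => hslope.hasDerivAt_integral_of_mem_Ioo hy) (Ioo_subset_Icc_self ht) hp₁ hp₁c)
    · simpa [div_div_eq_mul_div, mul_comm H] using hsmono.monotoneOn (Icc 0 ℓ)
    · rw [← hIcc] at hslope ⊢
      exact continuousOn_primitive_interval' hslope.intervalIntegrable left_mem_uIcc

/-- **Proposition 6.8 of the paper (in graph form).** For every `t ∈ (0, ℓ)`, the
point `(t, u(t))` lies on the circle of radius `1/H` centered at
`q₀(t) = (t + (s(t)−Ht)/H, u(t) − (1/H)√(1−(s(t)−Ht)²))`, and the closed disc of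
radius `1/H` centered at `q₀(t)` lies, within the strip `[0, ℓ] × ℝ`, entirely in
the subgraph of `u`. -/
theorem cantor_profile_interior_tangent_ball
    (H ℓ : ℝ) (hH : 0 < H) (hℓ : 0 < ℓ) (hHℓ : H * ℓ < 2)
    (s : ℝ → ℝ) (hscont : Continuous s) (hsmono : Monotone s)
    (hs0 : s 0 = 0) (hsℓ : s ℓ = H * ℓ)
    (hsym : ∀ t ∈ Set.Icc (0 : ℝ) ℓ, s t + s (ℓ - t) = H * ℓ)
    (hgt : ∀ t ∈ Set.Ioo (0 : ℝ) (ℓ / 2), H * t < s t)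
    (hbd : ∀ t ∈ Set.Icc (0 : ℝ) ℓ, |s t - H * t| ≤ H * ℓ / 2)
    (u : ℝ → ℝ)
    (hu : ∀ t, u t = ∫ r in (0 : ℝ)..t,
      (s r - H * r) / Real.sqrt (1 - (s r - H * r) ^ 2)) :
    ∀ t ∈ Set.Ioo (0 : ℝ) ℓ,
      Real.sqrt ((t - (t + (s t - H * t) / H)) ^ 2 +
          (u t - (u t - (1 / H) * Real.sqrt (1 - (s t - H * t) ^ 2))) ^ 2) = 1 / H ∧
      ∀ p₁ p₂ : ℝ,
        Real.sqrt ((p₁ - (t + (s t - H * t) / H)) ^ 2 +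
            (p₂ - (u t - (1 / H) * Real.sqrt (1 - (s t - H * t) ^ 2))) ^ 2) ≤ 1 / H →
        p₁ ∈ Set.Icc (0 : ℝ) ℓ →
        p₂ ≤ u p₁ :=
  cantor_profile_interior_tangent_ball_general H ℓ hH hHℓ s hscont hsmono hbd u hu
end

section
/- Under the assumptions on H, ℓ, s and u in the context, suppose s is constant, equal to some value s₀, on an open interval (a, b) ⊆ (0, ℓ). Then there exists c ∈ ℝ such that for every t ∈ (a, b) one has (t − s₀/H)² + (u(t) − c)² = 1/H² and u(t) ≥ c; that is, on (a, b) the graph of u is an arc of the circle of radius 1/H centered at (s₀/H, c). -/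
open Set intervalIntegral

/-- **Core claim of Proposition 6.9 of the paper.** On each open interval
`(a, b) ⊆ (0, ℓ)` where the staircase `s` is constant, equal to `s₀`, the graph
of `u` is an arc of the circle of radius `1/H` centered at `(s₀/H, c)` for some
`c ∈ ℝ`, lying on the upper half of that circle. -/
theorem cantor_profile_circular_arc
    (H ℓ : ℝ) (hH : 0 < H) (hℓ : 0 < ℓ) (hHℓ : H * ℓ < 2)
    (s : ℝ → ℝ) (hscont : Continuous s) (hsmono : Monotone s)
    (hs0 : s 0 = 0) (hsℓ : s ℓ = H * ℓ)
    (hsym : ∀ t ∈ Set.Icc (0 : ℝ) ℓ, s t + s (ℓ - t) = H * ℓ)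
    (hgt : ∀ t ∈ Set.Ioo (0 : ℝ) (ℓ / 2), H * t < s t)
    (hbd : ∀ t ∈ Set.Icc (0 : ℝ) ℓ, |s t - H * t| ≤ H * ℓ / 2)
    (u : ℝ → ℝ)
    (hu : ∀ t, u t = ∫ r in (0 : ℝ)..t,
      (s r - H * r) / Real.sqrt (1 - (s r - H * r) ^ 2))
    (a b s₀ : ℝ) (hab : a < b) (hsub : Set.Ioo a b ⊆ Set.Ioo (0 : ℝ) ℓ)
    (hconst : ∀ x ∈ Set.Ioo a b, s x = s₀) :
    ∃ c : ℝ, ∀ t ∈ Set.Ioo a b,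
      (t - s₀ / H) ^ 2 + (u t - c) ^ 2 = 1 / H ^ 2 ∧ c ≤ u t := by
  have h2 : H * ℓ / 2 < 1 := by nlinarith
  have h2' : (0:ℝ) ≤ H * ℓ / 2 := by positivity
  set f : ℝ → ℝ := fun r => (s r - H * r) / Real.sqrt (1 - (s r - H * r) ^ 2) with hf
  -- positivity of the radicand on `Icc 0 ℓ`
  have hpos : ∀ r ∈ Icc (0:ℝ) ℓ, 0 < 1 - (s r - H * r) ^ 2 := by
    intro r hr
    have h1 := hbd r hr
    nlinarith [sq_abs (s r - H * r), abs_nonneg (s r - H * r)]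
  have hnum : Continuous fun r : ℝ => s r - H * r :=
    hscont.sub (continuous_const.mul continuous_id)
  have hden : Continuous fun r : ℝ => Real.sqrt (1 - (s r - H * r) ^ 2) :=
    Real.continuous_sqrt.comp (continuous_const.sub (hnum.pow 2))
  have hcf : ContinuousOn f (Icc 0 ℓ) := by
    apply hnum.continuousOn.div hden.continuousOn
    intro r hr
    exact ne_of_gt (Real.sqrt_pos.mpr (hpos r hr))
  have hmeasf : MeasureTheory.StronglyMeasurable f :=
    (hnum.measurable.div hden.measurable).stronglyMeasurable
  -- the derivative of `u` on (a,b)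
  have hderiv : ∀ t ∈ Ioo a b, HasDerivAt u (f t) t := by
    intro t ht
    have hmem : t ∈ Ioo (0:ℝ) ℓ := hsub ht
    have hmem' : t ∈ Icc (0:ℝ) ℓ := ⟨hmem.1.le, hmem.2.le⟩
    have hInt : IntervalIntegrable f MeasureTheory.volume 0 t := by
      apply (hcf.mono ?_).intervalIntegrable
      rw [uIcc_of_le hmem.1.le]
      exact Icc_subset_Icc le_rfl hmem.2.le
    have hct : ContinuousAt f t := by
      apply ContinuousAt.div hnum.continuousAt hden.continuousAt
      exact ne_of_gt (Real.sqrt_pos.mpr (hpos t hmem'))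
    have h := intervalIntegral.integral_hasDerivAt_right hInt
      (hmeasf.stronglyMeasurableAtFilter) hct
    have hufun : u = fun x => ∫ r in (0:ℝ)..x, f r := funext hu
    rw [hufun]
    exact h
  -- the auxiliary function `g`
  set g : ℝ → ℝ := fun t => u t - Real.sqrt (1 - (s₀ - H * t) ^ 2) / H with hg
  have hgderiv : ∀ t ∈ Ioo a b, HasDerivAt g 0 t := by
    intro t ht
    have hmem : t ∈ Ioo (0:ℝ) ℓ := hsub ht
    have hst : s t = s₀ := hconst t ht
    have hposB : 0 < 1 - (s₀ - H * t) ^ 2 := by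
      have := hpos t ⟨hmem.1.le, hmem.2.le⟩; rwa [hst] at this
    have hsq : (0:ℝ) < Real.sqrt (1 - (s₀ - H * t) ^ 2) := Real.sqrt_pos.mpr hposB
    have h1 : HasDerivAt (fun x : ℝ => s₀ - H * x) (-H) t := by
      simpa using ((hasDerivAt_id t).const_mul H).const_sub s₀
    have h3 : HasDerivAt (fun x : ℝ => 1 - (s₀ - H * x) ^ 2)
        (-(2 * (s₀ - H * t) ^ 1 * (-H))) t := (h1.pow 2).const_sub 1
    have h4 := (h3.sqrt (ne_of_gt hposB)).div_const H
    have h5 := (hderiv t ht).sub h4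
    have hval : f t - (-(2 * (s₀ - H * t) ^ 1 * (-H))) /
        (2 * Real.sqrt (1 - (s₀ - H * t) ^ 2)) / H = 0 := by
      rw [hf]
      simp only [hst]
      field_simp
      ring
    rw [hval] at h5
    exact h5
  -- `g` is constant on `Ioo a b`
  have hconv : Convex ℝ (Ioo a b) := convex_Ioo a b
  have hdiff : DifferentiableOn ℝ g (Ioo a b) := fun x hx =>
    ((hgderiv x hx).differentiableAt).differentiableWithinAt
  have hfd : ∀ x ∈ Ioo a b, fderivWithin ℝ g (Ioo a b) x = 0 := by
    intro x hx
    rw [fderivWithin_of_isOpen isOpen_Ioo hx]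
    have := (hgderiv x hx).hasFDerivAt.fderiv
    rw [this]
    ext; simp
  set m := (a + b) / 2 with hm
  have hmmem : m ∈ Ioo a b := ⟨by linarith [hab], by linarith [hab]⟩
  refine ⟨g m, fun t ht => ?_⟩
  have hgc : g t = g m := hconv.is_const_of_fderivWithin_eq_zero hdiff hfd ht hmmem
  have hmem : t ∈ Ioo (0:ℝ) ℓ := hsub ht
  have hst : s t = s₀ := hconst t ht
  have hposB : 0 < 1 - (s₀ - H * t) ^ 2 := by
    have := hpos t ⟨hmem.1.le, hmem.2.le⟩; rwa [hst] at this
  have hsq : (0:ℝ) < Real.sqrt (1 - (s₀ - H * t) ^ 2) := Real.sqrt_pos.mpr hposB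
  have hut : u t - g m = Real.sqrt (1 - (s₀ - H * t) ^ 2) / H := by
    rw [← hgc, hg]; ring
  constructor
  · rw [hut, div_pow, Real.sq_sqrt hposB.le]
    field_simp
    ring
  · have : 0 ≤ u t - g m := by rw [hut]; positivity
    linarith
end

section
/- Let O ∈ ℝ², r > 0, φ₀ ∈ ℝ and β ∈ (0, π/2]. Consider the closed circular sector C = { O + ρ·(cos φ, sin φ) : 0 ≤ ρ ≤ r, φ₀ ≤ φ ≤ φ₀ + β } with arc endpoints x₀ = O + r·(cos φ₀, sin φ₀) and y₀ = O + r·(cos(φ₀ + β), sin(φ₀ + β)). Let θ : [0, 1] → ℝ² be a continuous curve with θ(0) = x₀ and θ(1) = y₀ whose image does not meet the interior of C. Then for every x ∈ C the distance from x to the image of θ is at most r, i.e. inf_{t ∈ [0,1]} |x − θ(t)| ≤ r. -/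
open Set Real

/-- The Euclidean distance between two points of `ℝ²` (represented as `ℝ × ℝ`). -/
noncomputable def eDist2 (p q : ℝ × ℝ) : ℝ :=
  Real.sqrt ((p.1 - q.1) ^ 2 + (p.2 - q.2) ^ 2)

/-- The closed circular sector of center `O`, radius `r`, initial angle `φ₀` and
aperture `β`. -/
def sector (O : ℝ × ℝ) (r φ₀ β : ℝ) : Set (ℝ × ℝ) :=
  {p | ∃ ρ φ : ℝ, 0 ≤ ρ ∧ ρ ≤ r ∧ φ₀ ≤ φ ∧ φ ≤ φ₀ + β ∧
    p = (O.1 + ρ * Real.cos φ, O.2 + ρ * Real.sin φ)}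

/-- Auxiliary: a point at radius `ρ ≤ r` and angle `φ` is within distance `r`
of the circle point at angle `ψ`, provided `cos (φ - ψ) ≥ 1/2`. -/
lemma eDist2_le_of_cos_ge (O : ℝ × ℝ) (ρ r φ ψ : ℝ) (hρ0 : 0 ≤ ρ) (hρr : ρ ≤ r)
    (hcos : (1:ℝ)/2 ≤ Real.cos (φ - ψ)) :
    eDist2 (O.1 + ρ * Real.cos φ, O.2 + ρ * Real.sin φ)
      (O.1 + r * Real.cos ψ, O.2 + r * Real.sin ψ) ≤ r := by
  have hr0 : (0:ℝ) ≤ r := le_trans hρ0 hρr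
  unfold eDist2
  rw [show Real.sqrt (((O.1 + ρ * Real.cos φ) - (O.1 + r * Real.cos ψ)) ^ 2 +
      ((O.2 + ρ * Real.sin φ) - (O.2 + r * Real.sin ψ)) ^ 2) =
      Real.sqrt ((ρ * Real.cos φ - r * Real.cos ψ) ^ 2 +
        (ρ * Real.sin φ - r * Real.sin ψ) ^ 2) by ring_nf]
  have h1 : (ρ * Real.cos φ - r * Real.cos ψ) ^ 2 +
      (ρ * Real.sin φ - r * Real.sin ψ) ^ 2 ≤ r ^ 2 := by
    have hc := Real.cos_sub φ ψ
    have hs1 := Real.sin_sq_add_cos_sq φ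
    have hs2 := Real.sin_sq_add_cos_sq ψ
    nlinarith [mul_nonneg hρ0 hr0, sq_nonneg (ρ - r)]
  calc Real.sqrt ((ρ * Real.cos φ - r * Real.cos ψ) ^ 2 +
        (ρ * Real.sin φ - r * Real.sin ψ) ^ 2)
      ≤ Real.sqrt (r ^ 2) := Real.sqrt_le_sqrt h1
    _ = r := Real.sqrt_sq hr0

lemma half_le_cos_of_abs_le (α : ℝ) (h : |α| ≤ Real.pi / 4) :
    (1:ℝ)/2 ≤ Real.cos α := by
  rw [← Real.cos_abs]
  have h1 : Real.cos (Real.pi / 4) ≤ Real.cos |α| := by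
    apply Real.cos_le_cos_of_nonneg_of_le_pi (abs_nonneg α) _ h
    linarith [Real.pi_pos]
  rw [Real.cos_pi_div_four] at h1
  nlinarith [Real.sq_sqrt (by norm_num : (2:ℝ) ≥ 0), Real.sqrt_nonneg 2]

/-- **First part of Lemma 6.10 of the paper.** If a circular sector of radius `r`
spans an angle `β ≤ π/2`, and `θ` is a continuous curve joining the two arc
endpoints whose image avoids the interior of the sector, then every point of the
sector is at distance at most `r` from the image of `θ`. -/
theorem sector_distance_to_curve_small_angle
    (O : ℝ × ℝ) (r : ℝ) (hr : 0 < r) (φ₀ β : ℝ)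
    (hβ : β ∈ Set.Ioc (0 : ℝ) (Real.pi / 2))
    (θ : ℝ → ℝ × ℝ) (hθcont : ContinuousOn θ (Set.Icc 0 1))
    (hθ0 : θ 0 = (O.1 + r * Real.cos φ₀, O.2 + r * Real.sin φ₀))
    (hθ1 : θ 1 = (O.1 + r * Real.cos (φ₀ + β), O.2 + r * Real.sin (φ₀ + β)))
    (hθavoid : ∀ t ∈ Set.Icc (0 : ℝ) 1, θ t ∉ interior (sector O r φ₀ β)) :
    ∀ x ∈ sector O r φ₀ β,
      sInf {d : ℝ | ∃ t ∈ Set.Icc (0 : ℝ) 1, d = eDist2 x (θ t)} ≤ r := by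
  intro x hx
  obtain ⟨ρ, φ, hρ0, hρr, hφl, hφr, hxeq⟩ := hx
  have hbdd : BddBelow {d : ℝ | ∃ t ∈ Set.Icc (0 : ℝ) 1, d = eDist2 x (θ t)} := by
    refine ⟨0, fun d hd => ?_⟩
    obtain ⟨t, _, rfl⟩ := hd
    exact Real.sqrt_nonneg _
  have key : ∃ d ∈ {d : ℝ | ∃ t ∈ Set.Icc (0 : ℝ) 1, d = eDist2 x (θ t)}, d ≤ r := by
    by_cases hc : φ ≤ φ₀ + β / 2
    · refine ⟨eDist2 x (θ 0), ⟨0, by norm_num, rfl⟩, ?_⟩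
      rw [hθ0, hxeq]
      apply eDist2_le_of_cos_ge O ρ r φ φ₀ hρ0 hρr
      apply half_le_cos_of_abs_le
      rw [abs_le]
      constructor <;> linarith [hβ.2, Real.pi_pos]
    · refine ⟨eDist2 x (θ 1), ⟨1, by norm_num, rfl⟩, ?_⟩
      rw [hθ1, hxeq]
      apply eDist2_le_of_cos_ge O ρ r φ (φ₀ + β) hρ0 hρr
      apply half_le_cos_of_abs_le
      rw [abs_le]
      push_neg at hc
      constructor <;> linarith [hβ.2, Real.pi_pos]
  obtain ⟨d, hd, hdr⟩ := key
  exact le_trans (csInf_le hbdd hd) hdr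
end

section
/- Let O ∈ ℝ², r > 0, φ₀ ∈ ℝ and β ∈ (π/2, π). Consider the closed circular sector C = { O + ρ·(cos φ, sin φ) : 0 ≤ ρ ≤ r, φ₀ ≤ φ ≤ φ₀ + β } with arc endpoints x₀ = O + r·(cos φ₀, sin φ₀) and y₀ = O + r·(cos(φ₀ + β), sin(φ₀ + β)). Then for every δ with 0 < δ < 2·r·sin((π − β)/2), the sector C is covered as C ⊆ B̄_r(x₀) ∪ B̄_r(y₀) ∪ ⋃_{φ ∈ [φ₀, φ₀ + β]} B̄_r( O + (r + δ)·(cos φ, sin φ) ), where B̄_r(p) denotes the closed Euclidean disc of radius r centered at p ∈ ℝ². -/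
open Set Real

/-- **Key covering claim of the second part of Lemma 6.10 of the paper.** If a
circular sector of radius `r` spans an angle `β ∈ (π/2, π)` and
`0 < δ < 2r·sin((π−β)/2)`, then the sector is covered by the two closed discs of
radius `r` centered at the arc endpoints together with the closed discs of radius
`r` centered on the concentric arc of radius `r + δ`. -/
theorem sector_covering_large_angle
    (O : ℝ × ℝ) (r : ℝ) (hr : 0 < r) (φ₀ β : ℝ)
    (hβ : β ∈ Set.Ioo (Real.pi / 2) Real.pi)
    (δ : ℝ) (hδ0 : 0 < δ) (hδ : δ < 2 * r * Real.sin ((Real.pi - β) / 2)) :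
    ∀ p ∈ sector O r φ₀ β,
      eDist2 p (O.1 + r * Real.cos φ₀, O.2 + r * Real.sin φ₀) ≤ r ∨
      eDist2 p (O.1 + r * Real.cos (φ₀ + β), O.2 + r * Real.sin (φ₀ + β)) ≤ r ∨
      ∃ φ ∈ Set.Icc φ₀ (φ₀ + β),
        eDist2 p (O.1 + (r + δ) * Real.cos φ, O.2 + (r + δ) * Real.sin φ) ≤ r := by
  have key : ∀ ρ φ s ψ : ℝ,
      eDist2 (O.1 + ρ * Real.cos φ, O.2 + ρ * Real.sin φ)
        (O.1 + s * Real.cos ψ, O.2 + s * Real.sin ψ)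
      = Real.sqrt (ρ ^ 2 + s ^ 2 - 2 * ρ * s * Real.cos (φ - ψ)) := by
    intro ρ φ s ψ
    unfold eDist2
    congr 1
    have h1 := Real.sin_sq_add_cos_sq φ
    have h2 := Real.sin_sq_add_cos_sq ψ
    dsimp only
    rw [Real.cos_sub]
    linear_combination ρ ^ 2 * h1 + s ^ 2 * h2
  have sqrt_le : ∀ x : ℝ, x ≤ r ^ 2 → Real.sqrt x ≤ r := by
    intro x hx
    calc Real.sqrt x ≤ Real.sqrt (r ^ 2) := Real.sqrt_le_sqrt hx
      _ = r := by rw [Real.sqrt_sq hr.le]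
  obtain ⟨hβ1, hβ2⟩ := hβ
  have hpi := Real.pi_pos
  rintro p ⟨ρ, φ, hρ0, hρr, hφ1, hφ2, rfl⟩
  by_cases hcase : δ ≤ ρ
  · -- use the concentric arc disc at angle φ
    right; right
    refine ⟨φ, ⟨hφ1, hφ2⟩, ?_⟩
    rw [key, sub_self, Real.cos_zero]
    apply sqrt_le
    nlinarith
  · push_neg at hcase
    -- ρ < δ, hence ρ < 2r cos(β/2); use nearest endpoint
    have hsin : Real.sin ((Real.pi - β) / 2) = Real.cos (β / 2) := by
      have : (Real.pi - β) / 2 = Real.pi / 2 - β / 2 := by ring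
      rw [this, Real.sin_pi_div_two_sub]
    rw [hsin] at hδ
    by_cases hhalf : φ ≤ φ₀ + β / 2
    · left
      rw [key]
      apply sqrt_le
      have hang0 : 0 ≤ φ - φ₀ := by linarith
      have hang : φ - φ₀ ≤ β / 2 := by linarith
      have hc : Real.cos (β / 2) ≤ Real.cos (φ - φ₀) := by
        apply Real.cos_le_cos_of_nonneg_of_le_pi hang0 (by linarith)
        exact hang
      have h2r : ρ ≤ 2 * r * Real.cos (φ - φ₀) := by
        have := mul_le_mul_of_nonneg_left hc (by linarith : (0:ℝ) ≤ 2 * r)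
        linarith
      nlinarith [mul_nonneg hρ0 (sub_nonneg.2 h2r)]
    · right; left
      push_neg at hhalf
      rw [key]
      apply sqrt_le
      have hang0 : 0 ≤ (φ₀ + β) - φ := by linarith
      have hang : (φ₀ + β) - φ ≤ β / 2 := by linarith
      have hc : Real.cos (β / 2) ≤ Real.cos ((φ₀ + β) - φ) := by
        apply Real.cos_le_cos_of_nonneg_of_le_pi hang0 (by linarith)
        exact hang
      rw [show φ - (φ₀ + β) = -((φ₀ + β) - φ) by ring, Real.cos_neg]
      have h2r : ρ ≤ 2 * r * Real.cos ((φ₀ + β) - φ) := by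
        have := mul_le_mul_of_nonneg_left hc (by linarith : (0:ℝ) ≤ 2 * r)
        linarith
      nlinarith [mul_nonneg hρ0 (sub_nonneg.2 h2r)]
end
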